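/- Let S be diagonal positive definite and p strictly outside the ellipsoid E = {y : yᵀS⁻²y ≤ 1} with all p_i ≥ 0. The point y* defined by y*_i = S_ii²p_i/(λ*+S_ii²), where λ* > 0 solves ∑S_ii²p_i²/(λ+S_ii²)² = 1, is the global minimizer of ‖p − y‖² over E. -/

import Mathlib

/-!
The point `y` satisfies the KKT conditions of the projection problem with multiplier `l > 0`:
it lies on the boundary of the ellipsoid and `p - y = l • S⁻² y` is an outward normal there.
Hence `⟪p - y, z - y⟫ = l (⟪y, z⟫_S - 1) ≤ 0` for every `z` in the ellipsoid, by AM–GM in the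
weighted inner product `⟪y, z⟫_S = ∑ yᵢ zᵢ / Sᵢ²`, and this variational inequality makes `y`
the nearest point.
-/

open Finset

section Projection

variable {ι : Type*} [Fintype ι]

theorem sum_sq_sub_le_of_sum_mul_sub_nonpos {p y z : ι → ℝ}
    (h : ∑ i, (p i - y i) * (z i - y i) ≤ 0) :
    ∑ i, (p i - y i) ^ 2 ≤ ∑ i, (p i - z i) ^ 2 := by
  have hexpand : ∑ i, (p i - z i) ^ 2 = ∑ i, (p i - y i) ^ 2
      - 2 * ∑ i, (p i - y i) * (z i - y i) + ∑ i, (z i - y i) ^ 2 := by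
    rw [mul_sum, ← sum_sub_distrib, ← sum_add_distrib]
    exact sum_congr rfl fun i _ => by ring
  have hsq : 0 ≤ ∑ i, (z i - y i) ^ 2 := sum_nonneg fun i _ => sq_nonneg _
  linarith

theorem sum_mul_div_sq_le_one {S y z : ι → ℝ} (hy : ∑ i, y i ^ 2 / S i ^ 2 ≤ 1)
    (hz : ∑ i, z i ^ 2 / S i ^ 2 ≤ 1) :
    ∑ i, y i * z i / S i ^ 2 ≤ 1 := by
  have hamgm : ∀ i, y i * z i / S i ^ 2 ≤ (y i ^ 2 / S i ^ 2 + z i ^ 2 / S i ^ 2) / 2 := by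
    intro i
    have h := div_le_div_of_nonneg_right (two_mul_le_add_sq (y i) (z i)) (sq_nonneg (S i))
    rw [add_div, mul_assoc, mul_div_assoc] at h
    linarith
  calc ∑ i, y i * z i / S i ^ 2
      ≤ ∑ i, (y i ^ 2 / S i ^ 2 + z i ^ 2 / S i ^ 2) / 2 := sum_le_sum fun i _ => hamgm i
    _ = (∑ i, y i ^ 2 / S i ^ 2 + ∑ i, z i ^ 2 / S i ^ 2) / 2 := by
      rw [← sum_div, sum_add_distrib]
    _ ≤ 1 := by linarith

theorem sum_sq_sub_le_of_kkt {S p y : ι → ℝ} {l : ℝ} (hl : 0 ≤ l)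
    (hstat : ∀ i, p i - y i = l * (y i / S i ^ 2)) (hbdry : ∑ i, y i ^ 2 / S i ^ 2 = 1)
    {z : ι → ℝ} (hz : ∑ i, z i ^ 2 / S i ^ 2 ≤ 1) :
    ∑ i, (p i - y i) ^ 2 ≤ ∑ i, (p i - z i) ^ 2 := by
  apply sum_sq_sub_le_of_sum_mul_sub_nonpos
  have hyz := sum_mul_div_sq_le_one hbdry.le hz
  calc ∑ i, (p i - y i) * (z i - y i)
      = l * (∑ i, y i * z i / S i ^ 2 - ∑ i, y i ^ 2 / S i ^ 2) := by
        rw [← sum_sub_distrib, mul_sum]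
        exact sum_congr rfl fun i _ => by rw [hstat]; ring
    _ ≤ 0 := mul_nonpos_of_nonneg_of_nonpos hl (by linarith)

end Projection

theorem stmt5_general (n : ℕ) (S p : Fin n → ℝ) (hS : ∀ i, 0 < S i)
    (l : ℝ) (hl : 0 < l)
    (hroot : ∑ i, (S i)^2 * (p i)^2 / (l + (S i)^2)^2 = 1)
    (y : Fin n → ℝ) (hy : ∀ i, y i = (S i)^2 * p i / (l + (S i)^2)) :
    (∑ i, (y i)^2 / (S i)^2 ≤ 1) ∧
    ∀ z : Fin n → ℝ, (∑ i, (z i)^2 / (S i)^2 ≤ 1) →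
      ∑ i, (p i - y i)^2 ≤ ∑ i, (p i - z i)^2 := by
  have hS0 : ∀ i, S i ≠ 0 := fun i => (hS i).ne'
  have hlS : ∀ i, l + S i ^ 2 ≠ 0 := fun i => by have := hS i; positivity
  have hbdry : ∑ i, y i ^ 2 / S i ^ 2 = 1 := by
    rw [← hroot]
    refine sum_congr rfl fun i _ => ?_
    rw [hy]
    field_simp [hS0 i]
  have hstat : ∀ i, p i - y i = l * (y i / S i ^ 2) := fun i => by
    rw [hy]
    field_simp [hS0 i, hlS i]
    ring
  exact ⟨hbdry.le, fun z hz => sum_sq_sub_le_of_kkt hl.le hstat hbdry hz⟩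

/-- For p strictly outside the axis-aligned ellipsoid with p_i ≥ 0,
the point y*_i = S_ii²p_i/(λ*+S_ii²), where λ* > 0 solves
∑ S_ii²p_i²/(λ+S_ii²)² = 1, is the global minimizer of ‖p − y‖² over the
ellipsoid. -/
theorem stmt5 (n : ℕ) (S p : Fin n → ℝ) (hS : ∀ i, 0 < S i) (hp : ∀ i, 0 ≤ p i)
    (hout : 1 < ∑ i, (p i)^2 / (S i)^2)
    (l : ℝ) (hl : 0 < l)
    (hroot : ∑ i, (S i)^2 * (p i)^2 / (l + (S i)^2)^2 = 1)
    (y : Fin n → ℝ) (hy : ∀ i, y i = (S i)^2 * p i / (l + (S i)^2)) :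
    (∑ i, (y i)^2 / (S i)^2 ≤ 1) ∧
    ∀ z : Fin n → ℝ, (∑ i, (z i)^2 / (S i)^2 ≤ 1) →
      ∑ i, (p i - y i)^2 ≤ ∑ i, (p i - z i)^2 :=
  stmt5_general n S p hS l hl hroot y hy
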